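/- arXiv:1110.2602 — 4 statements merged into one kernel-verified Lean document; each statement's English description precedes it below -/
import Mathlib

section
/- Let f, g : (0,∞) → (0,∞), let γ > 1 and ε ∈ (0,1) be real numbers, and suppose there exists R > e^e such that f(r) ≤ (log(γ·r))^{1+(log(log r))^{ε−1}} · g(γ·r) for all r ≥ R. Then limsup_{r→∞} log f(r)/log r ≤ limsup_{r→∞} log g(r)/log r, where the limsups are taken in the extended real numbers. -/
open Real Filter
open scoped Topology

/-!
Since `log log r ≥ 1` for `r ≥ exp (exp 1)` and `ε < 1`, the exponent `1 + (log log r)^(ε-1)` is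
at most `2`, so `log f(r) ≤ 2 log log (γr) + log g(γr)` for large `r`. If `log g(s) / log s < c`
for large `s`, then `log f(r) / log r ≤ (2 log log (γr) + c log (γr)) / log r`, and the right-hand
side tends to `c` because `log (γr) ~ log r`.
-/

namespace EReal

variable {α : Type*} {l : Filter α}

theorem limsup_le_limsup_of_forall_eventually_lt {u v : α → EReal}
    (h : ∀ c : ℝ, (∀ᶠ x in l, v x < c) → limsup u l ≤ c) : limsup u l ≤ limsup v l := by
  refine le_of_forall_gt_imp_ge_of_dense fun x hx => ?_
  obtain ⟨c, hvc, hcx⟩ := exists_between_coe_real hx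
  exact (h c (eventually_lt_of_limsup_lt hvc)).trans hcx.le

theorem limsup_coe_le_of_eventually_le_of_tendsto [l.NeBot] {u w : α → ℝ} {c : ℝ}
    (huw : ∀ᶠ x in l, u x ≤ w x) (hw : Tendsto w l (𝓝 c)) :
    limsup (fun x => (u x : EReal)) l ≤ c :=
  calc limsup (fun x => (u x : EReal)) l ≤ limsup (fun x => (w x : EReal)) l :=
        limsup_le_limsup (huw.mono fun _ hx => EReal.coe_le_coe_iff.mpr hx)
    _ = c := (continuous_coe_real_ereal.tendsto c |>.comp hw).limsup_eq

end EReal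

section LogAsymptotics

variable {γ : ℝ}

theorem tendsto_log_const_mul_div_log (hγ : 0 < γ) :
    Tendsto (fun r => log (γ * r) / log r) atTop (𝓝 1) := by
  have h := (tendsto_log_atTop.inv_tendsto_atTop.const_mul (log γ)).add_const 1
  rw [mul_zero, zero_add] at h
  refine h.congr' ?_
  filter_upwards [eventually_gt_atTop 1] with r hr
  rw [log_mul hγ.ne' (by positivity), add_div, div_self (log_pos hr).ne', div_eq_mul_inv,
    Pi.inv_apply]

theorem tendsto_log_log_const_mul_div_log (hγ : 0 < γ) :
    Tendsto (fun r => log (log (γ * r)) / log r) atTop (𝓝 0) := by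
  have hlog : Tendsto (fun r => log (γ * r)) atTop atTop :=
    tendsto_log_atTop.comp (tendsto_id.const_mul_atTop hγ)
  have h := (isLittleO_log_id_atTop.tendsto_div_nhds_zero.comp hlog).mul
    (tendsto_log_const_mul_div_log hγ)
  rw [zero_mul] at h
  refine h.congr' ?_
  filter_upwards [hlog.eventually_ne_atTop 0] with r hr
  simp only [Function.comp_apply, id, div_mul_div_cancel₀ hr]

theorem tendsto_two_mul_log_log_add_mul_log_div_log (hγ : 0 < γ) (c : ℝ) :
    Tendsto (fun r => (2 * log (log (γ * r)) + c * log (γ * r)) / log r) atTop (𝓝 c) := by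
  have h := ((tendsto_log_log_const_mul_div_log hγ).const_mul 2).add
    ((tendsto_log_const_mul_div_log hγ).const_mul c)
  rw [mul_zero, zero_add, mul_one] at h
  simpa only [add_div, mul_div_assoc] using h

end LogAsymptotics

theorem one_le_log_log {r : ℝ} (hr : exp (exp 1) ≤ r) : 1 ≤ log (log r) := by
  have hr0 : 0 < r := (exp_pos _).trans_le hr
  rwa [le_log_iff_exp_le (log_pos <| (one_lt_exp_iff.mpr (exp_pos 1)).trans_le hr),
    le_log_iff_exp_le hr0]

theorem log_le_two_mul_log_add_log_of_le_rpow_mul {x y b p : ℝ} (hx : 0 < x) (hb : 1 ≤ b)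
    (hp : p ≤ 2) (h : x ≤ b ^ p * y) : log x ≤ 2 * log b + log y := by
  have hy : 0 < y := pos_of_mul_pos_right (hx.trans_le h) (by positivity)
  calc log x ≤ log (b ^ (2 : ℝ) * y) := log_le_log hx (h.trans (by gcongr))
    _ = 2 * log b + log y := by
        rw [log_mul (by positivity) hy.ne', log_rpow (by positivity)]

theorem stmt_3_general (f g : ℝ → ℝ) (γ ε : ℝ) (hγ : 1 < γ) (hε : ε ∈ Set.Ioo (0 : ℝ) 1)
    (hf : ∀ r > (0 : ℝ), 0 < f r)
    (hyp : ∃ R : ℝ, Real.exp (Real.exp 1) < R ∧ ∀ r : ℝ, R ≤ r →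
      f r ≤ (Real.log (γ * r)) ^ (1 + (Real.log (Real.log r)) ^ (ε - 1))
        * g (γ * r)) :
    Filter.limsup (fun r : ℝ => ((Real.log (f r) / Real.log r : ℝ) : EReal)) atTop
      ≤ Filter.limsup (fun r : ℝ => ((Real.log (g r) / Real.log r : ℝ) : EReal)) atTop := by
  obtain ⟨R, hR, hfg⟩ := hyp
  have hγ0 : 0 < γ := one_pos.trans hγ
  refine EReal.limsup_le_limsup_of_forall_eventually_lt fun c hc => ?_
  have hγr : Tendsto (γ * ·) atTop atTop := tendsto_id.const_mul_atTop hγ0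
  have hgc : ∀ᶠ r in atTop, log (g (γ * r)) / log (γ * r) < c :=
    hγr.eventually <| hc.mono fun _ h => EReal.coe_lt_coe_iff.mp h
  have hlogγr : ∀ᶠ r in atTop, 1 ≤ log (γ * r) :=
    (tendsto_log_atTop.comp hγr).eventually_ge_atTop 1
  refine EReal.limsup_coe_le_of_eventually_le_of_tendsto ?_
    (tendsto_two_mul_log_log_add_mul_log_div_log hγ0 c)
  filter_upwards [eventually_ge_atTop R, eventually_gt_atTop 1, hgc, hlogγr]
    with r hrR hr1 hgr hlog
  have hp : 1 + log (log r) ^ (ε - 1) ≤ 2 := by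
    linarith [rpow_le_one_of_one_le_of_nonpos (one_le_log_log (hR.le.trans hrR))
      (by linarith [hε.2] : ε - 1 ≤ 0)]
  have hf_le := log_le_two_mul_log_add_log_of_le_rpow_mul (hf r (by linarith)) hlog hp (hfg r hrR)
  have hg_lt := (div_lt_iff₀ (by linarith : (0 : ℝ) < log (γ * r))).mp hgr
  exact div_le_div_of_nonneg_right (by linarith) (log_pos hr1).le

/-- Growth comparison: if `f(r) ≤ (log(γr))^{1+(log log r)^{ε−1}} · g(γr)` for
all large `r`, then the order of `f` is at most the order of `g`
(limsups in the extended reals). -/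
theorem stmt_3 (f g : ℝ → ℝ) (γ ε : ℝ) (hγ : 1 < γ) (hε : ε ∈ Set.Ioo (0 : ℝ) 1)
    (hf : ∀ r > (0 : ℝ), 0 < f r) (hg : ∀ r > (0 : ℝ), 0 < g r)
    (hyp : ∃ R : ℝ, Real.exp (Real.exp 1) < R ∧ ∀ r : ℝ, R ≤ r →
      f r ≤ (Real.log (γ * r)) ^ (1 + (Real.log (Real.log r)) ^ (ε - 1))
        * g (γ * r)) :
    Filter.limsup (fun r : ℝ => ((Real.log (f r) / Real.log r : ℝ) : EReal)) atTop
      ≤ Filter.limsup (fun r : ℝ => ((Real.log (g r) / Real.log r : ℝ) : EReal)) atTop :=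
  stmt_3_general f g γ ε hγ hε hf hyp
end

section
/- Let ρ : (0,∞) → ℝ be differentiable with ρ(r) → ϱ ∈ ℝ and r·(log r)·ρ'(r) → 0 as r → ∞. Let f, g : (0,∞) → (0,∞), let (r_m) be a sequence of positive reals tending to +∞ such that g(r_m)/r_m^{ρ(r_m)} → σ ∈ (0,∞), let α₀ > 0 and let a ∈ (0,∞) with limsup_{m→∞} f(α₀·r_m)/g(r_m) ≥ a. Then limsup_{r→∞} f(r)/r^{ρ(r)} ≥ a·σ/α₀^ϱ. -/
/-!
For a proximate order `ρ` with limit `ϱ`, the function `V(r) = r ^ ρ(r)` is regularly varying: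
`V(c r) / V(r) → c ^ ϱ`, because by the mean value theorem
`log r · (ρ(c r) - ρ(r)) ≈ (c - 1) · ξ log ξ · ρ'(ξ) → 0`. Hence along `s_m = α₀ r_m`,
`f(s_m) / V(s_m) = f(s_m)/g(r_m) · g(r_m)/V(r_m) · V(r_m)/V(s_m)`, where the last two factors
tend to `σ` and `α₀ ^ (-ϱ)`, so the limsup of the left side is at least `a σ / α₀ ^ ϱ`, and the
limsup along `s_m → ∞` is at most the type of `f`.
-/

open Real Filter Topology Asymptotics Set

structure IsProximateOrder (ρ : ℝ → ℝ) (ϱ : ℝ) : Prop where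
  differentiableAt : ∀ x > (0 : ℝ), DifferentiableAt ℝ ρ x
  tendsto : Tendsto ρ atTop (𝓝 ϱ)
  tendsto_mul_log_mul_deriv : Tendsto (fun x : ℝ => x * log x * deriv ρ x) atTop (𝓝 0)

namespace IsProximateOrder

variable {ρ : ℝ → ℝ} {ϱ c : ℝ}

/-- On `[x, c x]` every `t` is at least `y = min 1 c * x`, so
`|ρ' t| ≤ ε / (t log t) ≤ ε / (y log y)` and the mean value inequality applies. -/
lemma abs_log_mul_sub_le (hdiff : ∀ x > (0 : ℝ), DifferentiableAt ℝ ρ x) {x ε : ℝ} (hc : 0 < c)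
    (hx : 1 < min 1 c * x) (hε : ∀ t ≥ min 1 c * x, |t * log t * deriv ρ t| ≤ ε) :
    |log (min 1 c * x) * (ρ (c * x) - ρ x)| ≤ ε * (|c - 1| / min 1 c) := by
  set m := min 1 c
  set y := m * x
  have hm : 0 < m := lt_min one_pos hc
  have hxpos : 0 < x := pos_of_mul_pos_right (one_pos.trans hx) hm.le
  have hlogy : 0 < log y := log_pos hx
  have hy_le : ∀ t ∈ uIcc x (c * x), y ≤ t := fun t ht => by
    simpa [y, m, min_mul_of_nonneg _ _ hxpos.le] using ht.1
  have hderiv : ∀ t ∈ uIcc x (c * x), ‖deriv ρ t‖ ≤ ε / (y * log y) := fun t ht => by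
    have hyt := hy_le t ht
    have hlogt : 0 < log t := log_pos (hx.trans_le hyt)
    rw [le_div_iff₀ (by positivity), norm_eq_abs]
    calc |deriv ρ t| * (y * log y)
        ≤ |deriv ρ t| * (t * log t) := by gcongr; linarith
      _ = |t * log t * deriv ρ t| := by
          rw [abs_mul, abs_of_pos (show 0 < t * log t by nlinarith)]; ring
      _ ≤ ε := hε t hyt
  have hmvt := (convex_uIcc x (c * x)).norm_image_sub_le_of_norm_deriv_le
    (fun t ht => hdiff t (by linarith [hy_le t ht])) hderiv
    left_mem_uIcc right_mem_uIcc
  rw [norm_eq_abs, norm_eq_abs, show c * x - x = (c - 1) * x by ring, abs_mul,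
    abs_of_pos hxpos] at hmvt
  calc |log y * (ρ (c * x) - ρ x)| = log y * |ρ (c * x) - ρ x| := by
        rw [abs_mul, abs_of_pos hlogy]
    _ ≤ log y * (ε / (y * log y) * (|c - 1| * x)) := by gcongr
    _ = ε * (|c - 1| / m) := by field_simp; ring

lemma tendsto_log_mul_sub (hρ : IsProximateOrder ρ ϱ) (hc : 0 < c) :
    Tendsto (fun x => log x * (ρ (c * x) - ρ x)) atTop (𝓝 0) := by
  set m := min 1 c
  have hm : 0 < m := lt_min one_pos hc
  have hsub : Tendsto (fun x => ρ (c * x) - ρ x) atTop (𝓝 0) := by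
    simpa using (hρ.tendsto.comp (tendsto_id.const_mul_atTop hc)).sub hρ.tendsto
  have hlittle : (fun x => log (m * x) * (ρ (c * x) - ρ x)) =o[atTop] fun _ => (1 : ℝ) := by
    refine IsLittleO.trans_isBigO (g := fun _ => |c - 1| / m) (IsLittleO.of_bound fun ε hε => ?_)
      (isBigO_const_const _ one_ne_zero _)
    have hmx : Tendsto (fun x => m * x) atTop atTop := tendsto_id.const_mul_atTop hm
    obtain ⟨T, hT⟩ :=
      eventually_atTop.1 <| Metric.tendsto_nhds.1 hρ.tendsto_mul_log_mul_deriv ε hε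
    filter_upwards [hmx.eventually_gt_atTop 1, hmx.eventually_ge_atTop T] with x hx1 hxT
    simpa [abs_of_pos hm] using abs_log_mul_sub_le hρ.differentiableAt hc hx1
      fun t ht => (by simpa using (hT t (hxT.trans ht)).le)
  have hsplit : Tendsto (fun x => log (m * x) * (ρ (c * x) - ρ x) - log m * (ρ (c * x) - ρ x))
      atTop (𝓝 0) := by
    simpa using ((isLittleO_one_iff ℝ).1 hlittle).sub (hsub.const_mul (log m))
  refine hsplit.congr' ?_
  filter_upwards [eventually_gt_atTop 0] with x hx
  rw [log_mul hm.ne' hx.ne']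
  ring

lemma tendsto_rpow_div (hρ : IsProximateOrder ρ ϱ) (hc : 0 < c) :
    Tendsto (fun x => (c * x) ^ ρ (c * x) / x ^ ρ x) atTop (𝓝 (c ^ ϱ)) := by
  have hexp : Tendsto (fun x => exp (log c * ρ (c * x) + log x * (ρ (c * x) - ρ x))) atTop
      (𝓝 (c ^ ϱ)) := by
    rw [rpow_def_of_pos hc, ← add_zero (log c * ϱ)]
    exact (continuous_exp.tendsto _).comp <|
      ((hρ.tendsto.comp (tendsto_id.const_mul_atTop hc)).const_mul _).add
        (hρ.tendsto_log_mul_sub hc)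
  refine hexp.congr' ?_
  filter_upwards [eventually_gt_atTop 0] with x hx
  rw [rpow_def_of_pos (mul_pos hc hx), rpow_def_of_pos hx, ← exp_sub, log_mul hc.ne' hx.ne']
  ring_nf

end IsProximateOrder

lemma EReal.le_limsup_mul_of_tendsto {α : Type*} {l : Filter α} [l.NeBot] {u v : α → ℝ} {a L : ℝ}
    (hu : ∃ᶠ x in l, 0 ≤ u x) (hv : ∀ᶠ x in l, 0 ≤ v x) (hvL : Tendsto v l (𝓝 L))
    (ha : (a : EReal) ≤ limsup (fun x => (u x : EReal)) l) :
    ((a * L : ℝ) : EReal) ≤ limsup (fun x => ((u x * v x : ℝ) : EReal)) l := by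
  have hvL' : Tendsto (fun x => (v x : EReal)) l (𝓝 L) :=
    (continuous_coe_real_ereal.tendsto L).comp hvL
  calc ((a * L : ℝ) : EReal) = a * L := EReal.coe_mul a L
    _ ≤ limsup (fun x => (u x : EReal)) l * L :=
        mul_le_mul_of_nonneg_right ha (EReal.coe_nonneg.2 (ge_of_tendsto hvL hv))
    _ = limsup (fun x => (u x : EReal)) l * liminf (fun x => (v x : EReal)) l := by
        rw [hvL'.liminf_eq]
    _ ≤ limsup (fun x => ((u x * v x : ℝ) : EReal)) l := by
        simpa only [EReal.coe_mul, Pi.mul_def] using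
          EReal.le_limsup_mul (hu.mono fun _ h => EReal.coe_nonneg.2 h)
            (hv.mono fun _ h => EReal.coe_nonneg.2 h)

theorem stmt_7_general (ρ : ℝ → ℝ) (ϱ : ℝ)
    (hdiff : ∀ x > (0 : ℝ), DifferentiableAt ℝ ρ x)
    (hlim : Tendsto ρ atTop (nhds ϱ))
    (hslow : Tendsto (fun x : ℝ => x * Real.log x * deriv ρ x) atTop (nhds 0))
    (f g : ℝ → ℝ) (hf : ∀ x > (0 : ℝ), 0 < f x) (hg : ∀ x > (0 : ℝ), 0 < g x)
    (r : ℕ → ℝ) (hrtop : Tendsto r atTop atTop)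
    (σ : ℝ)
    (htype : Tendsto (fun m => g (r m) / (r m) ^ ρ (r m)) atTop (nhds σ))
    (α₀ : ℝ) (hα₀ : 0 < α₀) (a : ℝ)
    (hlimsup : (a : EReal) ≤
      Filter.limsup (fun m => ((f (α₀ * r m) / g (r m) : ℝ) : EReal)) atTop) :
    ((a * σ / α₀ ^ ϱ : ℝ) : EReal) ≤
      Filter.limsup (fun x : ℝ => ((f x / x ^ ρ x : ℝ) : EReal)) atTop := by
  have hρ : IsProximateOrder ρ ϱ := ⟨hdiff, hlim, hslow⟩
  have hr : ∀ᶠ m in atTop, 0 < r m := hrtop.eventually_gt_atTop 0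
  have hratio : Tendsto (fun m => r m ^ ρ (r m) / (α₀ * r m) ^ ρ (α₀ * r m)) atTop
      (𝓝 (α₀ ^ ϱ)⁻¹) := by
    simpa using ((hρ.tendsto_rpow_div hα₀).comp hrtop).inv₀ (rpow_pos_of_pos hα₀ ϱ).ne'
  have hu : ∀ᶠ m in atTop, 0 ≤ f (α₀ * r m) / g (r m) :=
    hr.mono fun m hm => (div_pos (hf _ (mul_pos hα₀ hm)) (hg _ hm)).le
  have hv : ∀ᶠ m in atTop,
      0 ≤ g (r m) / r m ^ ρ (r m) * (r m ^ ρ (r m) / (α₀ * r m) ^ ρ (α₀ * r m)) :=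
    hr.mono fun m hm => by have := hg _ hm; positivity
  have hseq := EReal.le_limsup_mul_of_tendsto hu.frequently hv (htype.mul hratio) hlimsup
  calc ((a * σ / α₀ ^ ϱ : ℝ) : EReal) = ((a * (σ * (α₀ ^ ϱ)⁻¹) : ℝ) : EReal) := by ring_nf
    _ ≤ limsup (fun m => ((f (α₀ * r m) / (α₀ * r m) ^ ρ (α₀ * r m) : ℝ) : EReal)) atTop := by
        refine hseq.trans_eq (limsup_congr (hr.mono fun m hm => ?_))
        have := hg _ hm
        have := rpow_pos_of_pos hm (ρ (r m))
        field_simp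
    _ ≤ limsup (fun x : ℝ => ((f x / x ^ ρ x : ℝ) : EReal)) atTop :=
        (hrtop.const_mul_atTop hα₀).limsup_comp_le_limsup
          (u := fun x => ((f x / x ^ ρ x : ℝ) : EReal))

/-- Equation (2.2) in the proof of Corollary 2.5: if `g(r_m)/r_m^{ρ(r_m)} → σ`
and `limsup f(α₀ r_m)/g(r_m) ≥ a > 0`, then the type of `f` with respect to
the proximate order `ρ` is at least `a·σ/α₀^ϱ`. -/
theorem stmt_7 (ρ : ℝ → ℝ) (ϱ : ℝ)
    (hdiff : ∀ x > (0 : ℝ), DifferentiableAt ℝ ρ x)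
    (hlim : Tendsto ρ atTop (nhds ϱ))
    (hslow : Tendsto (fun x : ℝ => x * Real.log x * deriv ρ x) atTop (nhds 0))
    (f g : ℝ → ℝ) (hf : ∀ x > (0 : ℝ), 0 < f x) (hg : ∀ x > (0 : ℝ), 0 < g x)
    (r : ℕ → ℝ) (hrpos : ∀ m, 0 < r m) (hrtop : Tendsto r atTop atTop)
    (σ : ℝ) (hσ : 0 < σ)
    (htype : Tendsto (fun m => g (r m) / (r m) ^ ρ (r m)) atTop (nhds σ))
    (α₀ : ℝ) (hα₀ : 0 < α₀) (a : ℝ) (ha : 0 < a)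
    (hlimsup : (a : EReal) ≤
      Filter.limsup (fun m => ((f (α₀ * r m) / g (r m) : ℝ) : EReal)) atTop) :
    ((a * σ / α₀ ^ ϱ : ℝ) : EReal) ≤
      Filter.limsup (fun x : ℝ => ((f x / x ^ ρ x : ℝ) : EReal)) atTop :=
  stmt_7_general ρ ϱ hdiff hlim hslow f g hf hg r hrtop σ htype α₀ hα₀ a hlimsup
end

section
/- Let (Ω, 𝒜, μ) be a measure space and A ∈ 𝒜 with 0 < μ(A) < ∞. Let (g_m) be a sequence of measurable functions g_m : Ω → (0,∞), and let (c_m) and (d_m) be sequences of positive real numbers such that ∫_A g_m dμ ≤ d_m for every m, and such that for every L ∈ A the sequence c_m/g_m(L) tends to 0 as m → ∞. Then c_m/d_m → 0 as m → ∞. -/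
/-!
On `A` the ratios `g m / c m` tend to `∞`, so by Fatou's lemma
`∞ = ∫_A liminf (g m / c m) ≤ liminf ∫_A g m / c m ≤ liminf (d m / c m)`,
using `μ A > 0` for the equality. Hence `d m / c m → ∞`.
-/

open MeasureTheory Filter

open scoped ENNReal Topology

theorem tendsto_lintegral_top_of_ae_tendsto_top {α ι : Type*} [MeasurableSpace α]
    {μ : Measure α} {u : Filter ι} [u.NeBot] [u.IsCountablyGenerated] {f : ι → α → ℝ≥0∞}
    (hf : ∀ i, AEMeasurable (f i) μ) (hμ : μ ≠ 0) (htop : ∀ᵐ x ∂μ, Tendsto (f · x) u (𝓝 ∞)) :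
    Tendsto (fun i => ∫⁻ x, f i x ∂μ) u (𝓝 ∞) := by
  refine tendsto_of_le_liminf_of_limsup_le ?_ le_top
  calc ∞ = ∫⁻ _, ∞ ∂μ := by simp [hμ]
    _ = ∫⁻ x, liminf (f · x) u ∂μ := lintegral_congr_ae <| htop.mono fun x hx => hx.liminf_eq.symm
    _ ≤ liminf (fun i => ∫⁻ x, f i x ∂μ) u := lintegral_liminf_le' hf

theorem stmt_8_general {Ω : Type*} [MeasurableSpace Ω] (μ : Measure Ω)
    (A : Set Ω) (hA : MeasurableSet A) (hA0 : 0 < μ A)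
    (g : ℕ → Ω → ℝ) (hmeas : ∀ m, Measurable (g m))
    (hgpos : ∀ m L, 0 < g m L)
    (c d : ℕ → ℝ) (hc : ∀ m, 0 < c m)
    (hint : ∀ m, ∫⁻ L in A, ENNReal.ofReal (g m L) ∂μ ≤ ENNReal.ofReal (d m))
    (hconv : ∀ L ∈ A, Tendsto (fun m => c m / g m L) atTop (nhds 0)) :
    Tendsto (fun m => c m / d m) atTop (nhds 0) := by
  have hratio : ∀ L ∈ A, Tendsto (fun m => g m L / c m) atTop atTop := fun L hL => by
    have hpos : ∀ m, 0 < c m / g m L := fun m => div_pos (hc m) (hgpos m L)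
    simpa only [Pi.inv_def, inv_div] using (tendsto_nhdsWithin_of_tendsto_nhds_of_eventually_within
      _ (hconv L hL) (.of_forall hpos)).inv_tendsto_nhdsGT_zero
  have hintegral : Tendsto (fun m => ∫⁻ L in A, ENNReal.ofReal (g m L / c m) ∂μ) atTop (𝓝 ∞) :=
    tendsto_lintegral_top_of_ae_tendsto_top
      (fun m => ((hmeas m).div_const _).ennreal_ofReal.aemeasurable)
      (by simpa [Measure.restrict_eq_zero] using hA0.ne')
      ((ae_restrict_iff' hA).2 <| .of_forall fun L hL =>
        ENNReal.tendsto_ofReal_nhds_top.2 (hratio L hL))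
  have hbound (m : ℕ) :
      ∫⁻ L in A, ENNReal.ofReal (g m L / c m) ∂μ ≤ ENNReal.ofReal (d m / c m) := by
    simp_rw [ENNReal.ofReal_div_of_pos (hc m), ENNReal.div_eq_inv_mul]
    rw [lintegral_const_mul' _ _ (by simpa using hc m)]
    gcongr
    exact hint m
  have hdc : Tendsto (fun m => d m / c m) atTop atTop :=
    ENNReal.tendsto_ofReal_nhds_top.1 (tendsto_nhds_top_mono' hintegral hbound)
  simpa only [Pi.inv_def, inv_div] using hdc.inv_tendsto_atTop

/-- Measure-theoretic core of Lemma 2.6: if `∫_A g_m dμ ≤ d_m` and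
`c_m/g_m(L) → 0` for every `L ∈ A`, where `0 < μ(A) < ∞`, then `c_m/d_m → 0`. -/
theorem stmt_8 {Ω : Type*} [MeasurableSpace Ω] (μ : Measure Ω)
    (A : Set Ω) (hA : MeasurableSet A) (hA0 : 0 < μ A) (hAfin : μ A < ⊤)
    (g : ℕ → Ω → ℝ) (hmeas : ∀ m, Measurable (g m))
    (hgpos : ∀ m L, 0 < g m L)
    (c d : ℕ → ℝ) (hc : ∀ m, 0 < c m) (hd : ∀ m, 0 < d m)
    (hint : ∀ m, ∫⁻ L in A, ENNReal.ofReal (g m L) ∂μ ≤ ENNReal.ofReal (d m))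
    (hconv : ∀ L ∈ A, Tendsto (fun m => c m / g m L) atTop (nhds 0)) :
    Tendsto (fun m => c m / d m) atTop (nhds 0) :=
  stmt_8_general μ A hA hA0 g hmeas hgpos c d hc hint hconv
end

section
/- Let f, g : (0,∞) → [0,∞), let r > e^e be a real number, and assume g is upper semicontinuous at every point of [r, 2r]. Suppose that for every integer s ≥ 2 one has f(r) ≤ (log((1+1/s)·r))^{1+(log(log r))^{(1/s)−1}} · g((1+1/s)·r). Then f(r) ≤ e·(log r)·g(r). -/
/-!
Along `x_s = (1 + 1/s) r → r` the factors `(log x_s)^{1 + (log log r)^{1/s - 1}}` converge to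
`(log r)^{1 + 1/log log r} = e · log r`, while upper semicontinuity gives `g x_s < y` eventually
for every `y > g r`. Passing to the limit yields `f r ≤ e · log r · y`, and then one lets `y ↓ g r`.
-/

open Real Filter Topology

theorem le_mul_of_tendsto_of_upperSemicontinuousAt {ι α : Type*} [TopologicalSpace α]
    {l : Filter ι} [l.NeBot] {a : ι → ℝ} {x : ι → α} {g : α → ℝ} {A c : ℝ} {x₀ : α}
    (ha : Tendsto a l (𝓝 A)) (hx : Tendsto x l (𝓝 x₀)) (hg : UpperSemicontinuousAt g x₀)
    (ha0 : ∀ᶠ i in l, 0 ≤ a i) (hc : ∀ᶠ i in l, c ≤ a i * g (x i)) : c ≤ A * g x₀ := by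
  have hlt : ∀ y > g x₀, c ≤ A * y := fun y hy =>
    ge_of_tendsto (ha.mul_const y) <| by
      filter_upwards [hc, ha0, hx.eventually (hg y hy)] with i hci hai hgi
      exact hci.trans (mul_le_mul_of_nonneg_left hgi.le hai)
  have hA : Tendsto (fun y => A * y) (𝓝[>] g x₀) (𝓝 (A * g x₀)) :=
    (tendsto_const_nhds.mul tendsto_id).mono_left nhdsWithin_le_nhds
  exact ge_of_tendsto hA (eventually_nhdsWithin_of_forall hlt)

theorem Real.rpow_one_add_inv_log {x : ℝ} (hx : 0 < x) (hx1 : x ≠ 1) :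
    x ^ (1 + (log x)⁻¹) = exp 1 * x := by
  have hlog : log x ≠ 0 := log_ne_zero_of_pos_of_ne_one hx hx1
  rw [rpow_add hx, rpow_one, rpow_def_of_pos hx, mul_inv_cancel₀ hlog, mul_comm]

theorem stmt_12_general (f g : ℝ → ℝ)
    (r : ℝ) (hr : Real.exp (Real.exp 1) < r)
    (husc : ∀ x ∈ Set.Icc r (2 * r), UpperSemicontinuousAt g x)
    (hyp : ∀ s : ℕ, 2 ≤ s →
      f r ≤ (Real.log ((1 + 1 / (s : ℝ)) * r)) ^
          (1 + (Real.log (Real.log r)) ^ (1 / (s : ℝ) - 1))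
        * g ((1 + 1 / (s : ℝ)) * r)) :
    f r ≤ Real.exp 1 * Real.log r * g r := by
  have he : 1 < exp 1 := one_lt_exp_iff.mpr one_pos
  have hlog : exp 1 < log r := (lt_log_iff_exp_lt ((exp_pos _).trans hr)).mpr hr
  have hloglog : 1 < log (log r) := (lt_log_iff_exp_lt (by linarith)).mpr (by simpa using hlog)
  have hr1 : 1 < r := (one_lt_exp_iff.mpr (by linarith)).trans hr
  have hinv : Tendsto (fun s : ℕ => 1 / (s : ℝ)) atTop (𝓝 0) := tendsto_one_div_atTop_nhds_zero_nat
  have hx : Tendsto (fun s : ℕ => (1 + 1 / (s : ℝ)) * r) atTop (𝓝 r) := by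
    simpa using (hinv.const_add 1).mul_const r
  have hexp : Tendsto (fun s : ℕ => 1 + log (log r) ^ (1 / (s : ℝ) - 1)) atTop
      (𝓝 (1 + (log (log r))⁻¹)) := by
    rw [← rpow_neg_one]
    refine (tendsto_const_nhds.rpow ?_ (Or.inl (by positivity))).const_add 1
    simpa using hinv.sub_const 1
  have ha : Tendsto (fun s : ℕ => log ((1 + 1 / (s : ℝ)) * r) ^
      (1 + log (log r) ^ (1 / (s : ℝ) - 1))) atTop (𝓝 (exp 1 * log r)) := by
    rw [← rpow_one_add_inv_log (by linarith) (by linarith)]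
    exact ((continuousAt_log (by positivity)).tendsto.comp hx).rpow hexp (Or.inl (by linarith))
  refine le_mul_of_tendsto_of_upperSemicontinuousAt ha hx (husc r ⟨le_rfl, by linarith⟩) ?_
    (eventually_atTop.mpr ⟨2, hyp⟩)
  filter_upwards with s
  exact rpow_nonneg (log_nonneg
    (one_le_mul_of_one_le_of_one_le (le_add_of_nonneg_right (by positivity)) hr1.le)) _

/-- Limiting step (s → ∞) in the proof of Lemma 2.7: for `r > e^e` and `g`
upper semicontinuous on `[r, 2r]`, the family of inequalities
`f(r) ≤ (log((1+1/s)r))^{1+(log log r)^{1/s−1}} · g((1+1/s)r)` for all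
integers `s ≥ 2` implies `f(r) ≤ e·(log r)·g(r)`. -/
theorem stmt_12 (f g : ℝ → ℝ)
    (hf : ∀ x > (0 : ℝ), 0 ≤ f x) (hg : ∀ x > (0 : ℝ), 0 ≤ g x)
    (r : ℝ) (hr : Real.exp (Real.exp 1) < r)
    (husc : ∀ x ∈ Set.Icc r (2 * r), UpperSemicontinuousAt g x)
    (hyp : ∀ s : ℕ, 2 ≤ s →
      f r ≤ (Real.log ((1 + 1 / (s : ℝ)) * r)) ^
          (1 + (Real.log (Real.log r)) ^ (1 / (s : ℝ) - 1))
        * g ((1 + 1 / (s : ℝ)) * r)) :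
    f r ≤ Real.exp 1 * Real.log r * g r :=
  stmt_12_general f g r hr husc hyp
end
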